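/- arXiv:2310.05630 — 3 statements merged into one kernel-verified Lean document; each statement's English description precedes it below -/
import Mathlib

section
/- Fix k ≥ 2, 0 < β < π/(k−1), and R_k < 0. Let R : S(β,ρ) → ℂ be a holomorphic function of the form R(u) = u + R_k u^k + O(|u|^{k+1}). Then for any μ ∈ (0, (k−1)|R_k| cos κ), where κ = (k−1)β/2, there exists ρ > 0 small enough so that R maps S(β,ρ) into itself and for every u ∈ S(β,ρ) and every integer j ≥ 0, |R^j(u)| ≤ |u| / (1 + j μ |u|^{k−1})^{1/(k−1)}, where R^j denotes the j-th iterate. -/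
open Real

set_option maxHeartbeats 1000000

lemma aux_arcsin_nonneg_le {y : ℝ} (hy : 0 ≤ y) : Real.arcsin y ≤ π / 2 * y := by
  have hpi := Real.pi_pos
  rcases le_total 1 y with h1 | h1
  · calc Real.arcsin y ≤ π / 2 := Real.arcsin_le_pi_div_two y
      _ ≤ π / 2 * y := by nlinarith
  · have h2 : 2 / π * Real.arcsin y ≤ Real.sin (Real.arcsin y) :=
      Real.mul_le_sin (Real.arcsin_nonneg.2 hy) (Real.arcsin_le_pi_div_two y)
    rw [Real.sin_arcsin (by linarith) h1] at h2
    have h4 := mul_le_mul_of_nonneg_left h2 (le_of_lt (half_pos hpi))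
    have h5 : π / 2 * (2 / π * Real.arcsin y) = Real.arcsin y := by
      field_simp
    linarith

lemma aux_abs_arcsin_le (y : ℝ) : |Real.arcsin y| ≤ π / 2 * |y| := by
  rcases le_total 0 y with hy | hy
  · rw [abs_of_nonneg (Real.arcsin_nonneg.2 hy), abs_of_nonneg hy]
    exact aux_arcsin_nonneg_le hy
  · rw [abs_of_nonpos (Real.arcsin_nonpos.2 hy), abs_of_nonpos hy, ← Real.arcsin_neg]
    exact aux_arcsin_nonneg_le (by linarith)

lemma aux_theta_le {θ : ℝ} (h0 : 0 ≤ θ) (h : θ ≤ π / 2) : θ ≤ π / 2 * Real.sin θ := by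
  have hpi := Real.pi_pos
  have h2 := Real.mul_le_sin h0 h
  have h4 := mul_le_mul_of_nonneg_left h2 (le_of_lt (half_pos hpi))
  have h5 : π / 2 * (2 / π * θ) = θ := by field_simp
  linarith

lemma aux_iter {μ x y w : ℝ} (hμ : 0 < μ) (hx : 0 ≤ x) (hy : 0 ≤ y) (hw : 0 ≤ w) (j : ℕ)
    (h1 : w * (1 + μ * y) ≤ y) (h2 : y * (1 + (j:ℝ) * μ * x) ≤ x) :
    w * (1 + ((j:ℝ) + 1) * μ * x) ≤ x := by
  have hj : (0:ℝ) ≤ (j:ℝ) := Nat.cast_nonneg j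
  have hd3 : (0:ℝ) ≤ 1 + ((j:ℝ)+1) * μ * x := by positivity
  have key := mul_le_mul_of_nonneg_right h1 hd3
  nlinarith [mul_nonneg (mul_nonneg hμ.le hy) hw, mul_nonneg hμ.le hy,
    mul_nonneg (mul_nonneg hj hμ.le) hx,
    mul_nonneg (mul_nonneg (mul_nonneg hj hμ.le) hx) (mul_nonneg hμ.le hy)]

lemma aux_sq_le {A B : ℝ} (hA : 0 ≤ A) (hB : 0 ≤ B) (h : A^2 ≤ B^2) : A ≤ B := by
  nlinarith

/-- The complex sector `S(β,ρ) = { z : |arg z| < β/2, 0 < |z| < ρ }`. -/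
def Sector (β ρ : ℝ) : Set ℂ :=
  {z : ℂ | |Complex.arg z| < β / 2 ∧ 0 < ‖z‖ ∧ ‖z‖ < ρ}

/-- **Contraction of iterates of a parabolic map on a sector** (Lemma 2.4.2 of [BFM17]).
If `R(u) = u + R_k u^k + O(|u|^{k+1})` is holomorphic with `R_k < 0`, `k ≥ 2`,
`0 < β < π/(k-1)`, then for any `μ ∈ (0, (k-1)|R_k| cos κ)` with `κ = (k-1)β/2`
there is `ρ > 0` such that `R` maps `S(β,ρ)` into itself and
`|R^j(u)| ≤ |u|/(1 + jμ|u|^{k-1})^{1/(k-1)}` for all `u ∈ S(β,ρ)`, `u ≥ 0`. -/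
theorem stmt2 (k : ℕ) (hk : 2 ≤ k) (β : ℝ)
    (hβ : 0 < β ∧ β < Real.pi / ((k : ℝ) - 1))
    (Rk : ℝ) (hRk : Rk < 0) (R : ℂ → ℂ) (ρ₀ : ℝ) (hρ₀ : 0 < ρ₀)
    (hhol : DifferentiableOn ℂ R (Sector β ρ₀))
    (hform : ∃ C δ : ℝ, 0 < δ ∧ ∀ u ∈ Sector β δ,
      ‖R u - u - (Rk : ℂ) * u ^ k‖ ≤ C * ‖u‖ ^ (k + 1))
    (μ : ℝ) (hμ : 0 < μ ∧ μ < ((k : ℝ) - 1) * |Rk| * Real.cos (((k : ℝ) - 1) * β / 2)) :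
    ∃ ρ > (0:ℝ), Set.MapsTo R (Sector β ρ) (Sector β ρ) ∧
      ∀ u ∈ Sector β ρ, ∀ j : ℕ,
        ‖R^[j] u‖ ≤ ‖u‖ / (1 + (j : ℝ) * μ * ‖u‖ ^ (k - 1)) ^ (((k : ℝ) - 1)⁻¹) := by
  obtain ⟨hβ0, hβπ⟩ := hβ
  obtain ⟨hμ0, hμlt⟩ := hμ
  obtain ⟨C, δ, hδ0, hCb⟩ := hform
  have hpi := Real.pi_pos
  set n := k - 1 with hn
  have hn1 : 1 ≤ n := by omega
  have hkn : k = n + 1 := by omega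
  have hnR : (k:ℝ) - 1 = (n:ℝ) := by rw [hkn]; push_cast; ring
  have hn0 : (0:ℝ) < (n:ℝ) := by exact_mod_cast Nat.pos_of_ne_zero (by omega)
  have hn1R : (1:ℝ) ≤ (n:ℝ) := by exact_mod_cast hn1
  rw [hnR] at hμlt hβπ
  set κ := (n:ℝ) * β / 2 with hκdef
  have hκ0 : 0 ≤ κ := by positivity
  have hβn : β * (n:ℝ) < π := (lt_div_iff₀ hn0).mp hβπ
  have hκπ : κ < π / 2 := by rw [hκdef]; linarith only [hβn]
  have hβπ' : β < π := by
    have h2 : (0:ℝ) ≤ β * ((n:ℝ) - 1) :=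
      mul_nonneg hβ0.le (by linarith only [hn1R])
    linarith only [hβn, h2]
  have hRk0 : 0 < |Rk| := abs_pos.mpr (ne_of_lt hRk)
  have hRkeq : |Rk| = -Rk := abs_of_neg hRk
  have hcos : 0 < Real.cos κ := Real.cos_pos_of_mem_Ioo ⟨by linarith only [hκ0, hpi], hκπ⟩
  have hcos1 : Real.cos κ ≤ 1 := Real.cos_le_one κ
  set b := |Rk| * Real.cos κ with hbdef
  have hb : 0 < b := mul_pos hRk0 hcos
  set a := μ / (n:ℝ) with hadef
  have ha : 0 < a := div_pos hμ0 hn0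
  have hμa : μ = (n:ℝ) * a := by rw [hadef]; field_simp
  have hab : a < b := by
    rw [hadef, div_lt_iff₀ hn0]
    rw [hbdef]
    linarith only [hμlt]
  set C' := max C 0 with hC'def
  have hC0 : 0 ≤ C' := le_max_right C 0
  set K := |Rk|^2 + C' + (|Rk| + C') + π * (|Rk| + C') + π * C' / |Rk| + a + 1 with hKdef
  have hK : 0 < K := by positivity
  have hterm1 : (0:ℝ) ≤ |Rk|^2 := sq_nonneg _
  have hterm2 : (0:ℝ) ≤ π * (|Rk| + C') := by positivity
  have hterm3 : (0:ℝ) ≤ π * C' / |Rk| := by positivity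
  have hterm4 : (0:ℝ) ≤ |Rk| + C' := by positivity
  have hK1 : |Rk| + C' ≤ K := by
    rw [hKdef]; linarith only [hterm1, hterm2, hterm3, hC0, ha]
  have hK2 : |Rk|^2 + C' ≤ K := by
    rw [hKdef]; linarith only [hterm2, hterm3, hterm4, ha]
  have hK3 : a ≤ K := by
    rw [hKdef]; linarith only [hterm1, hterm2, hterm3, hterm4, hC0]
  have hK4 : π * (|Rk| + C') ≤ K := by
    rw [hKdef]; linarith only [hterm1, hterm3, hterm4, hC0, ha]
  have hK5 : π * C' / |Rk| ≤ K := by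
    rw [hKdef]; linarith only [hterm1, hterm2, hterm4, hC0, ha]
  set m := min (b - a) (min (β/8) (1/4)) with hmdef
  have hm : 0 < m :=
    lt_min (by linarith only [hab]) (lt_min (by linarith only [hβ0]) (by norm_num))
  have hmba : m ≤ b - a := min_le_left _ _
  have hmβ : m ≤ β/8 := le_trans (min_le_right _ _) (min_le_left _ _)
  have hm4 : m ≤ 1/4 := le_trans (min_le_right _ _) (min_le_right _ _)
  set ρ := min δ (min 1 (m / K)) with hρdef
  have hρ0 : 0 < ρ := lt_min hδ0 (lt_min one_pos (div_pos hm hK))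
  have hρδ : ρ ≤ δ := min_le_left _ _
  have hρ1 : ρ ≤ 1 := le_trans (min_le_right _ _) (min_le_left _ _)
  have hρK : K * ρ ≤ m := by
    have h1 : ρ ≤ m / K := le_trans (min_le_right _ _) (min_le_right _ _)
    calc K * ρ ≤ K * (m / K) := mul_le_mul_of_nonneg_left h1 hK.le
      _ = m := by field_simp
  -- the core one-step estimate
  have hstep : ∀ u ∈ Sector β ρ, (R u ∈ Sector β ρ) ∧
      ‖R u‖ ^ n * (1 + μ * ‖u‖ ^ n) ≤ ‖u‖ ^ n := by
    rintro u ⟨hargu, hu0, huρ⟩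
    have hu_ne : u ≠ 0 := by
      intro h; rw [h, norm_zero] at hu0; exact lt_irrefl 0 hu0
    set x := ‖u‖ with hxdef
    have hxnorm : ‖u‖ = x := rfl
    have hx0 : 0 < x := hu0
    have hx1 : x ≤ 1 := le_of_lt (lt_of_lt_of_le huρ hρ1)
    have hxn_le : x ^ n ≤ x := by
      calc x ^ n ≤ x ^ 1 := pow_le_pow_of_le_one hx0.le hx1 hn1
        _ = x := pow_one x
    have hxn0 : 0 < x ^ n := pow_pos hx0 n
    set t := Complex.arg u with htdef
    set θ := (n:ℝ) * t with hθdef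
    have habs_t : |t| < β / 2 := hargu
    have hθκ : |θ| ≤ κ := by
      rw [hθdef, abs_mul, Nat.abs_cast, hκdef]
      have h := mul_le_mul_of_nonneg_left habs_t.le hn0.le
      linarith only [h]
    have hcosθ : Real.cos κ ≤ Real.cos θ := by
      rw [← Real.cos_abs θ]
      exact Real.cos_le_cos_of_nonneg_of_le_pi (abs_nonneg θ) (by linarith only [hκπ, hpi]) hθκ
    have hxδ : u ∈ Sector β δ := ⟨hargu, by rw [hxnorm]; exact hx0,
      by rw [hxnorm]; exact lt_of_lt_of_le huρ hρδ⟩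
    set E := R u - u - (Rk:ℂ) * u ^ k with hEdef
    have hE : ‖E‖ ≤ C' * x ^ (k+1) := by
      have h1 := hCb u hxδ
      rw [hxnorm] at h1
      calc ‖E‖ = ‖E‖ := rfl
        _ ≤ C * x ^ (k+1) := h1
        _ ≤ C' * x ^ (k+1) := mul_le_mul_of_nonneg_right (le_max_left C 0) (by positivity)
    set z := 1 + (Rk:ℂ) * u ^ n + E / u with hzdef
    have hEu : u * (E / u) = E := mul_div_cancel₀ E hu_ne
    have huz : u * z = R u := by
      have h1 : u * z = u + (Rk:ℂ) * u ^ (n+1) + u * (E / u) := by rw [hzdef]; ring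
      rw [h1, hEu, ← hkn, hEdef]; ring
    -- components of Rk * u^n
    have hupow : (Rk:ℂ) * u ^ n =
        ((Rk * x ^ n * Real.cos θ : ℝ) : ℂ) + ((Rk * x ^ n * Real.sin θ : ℝ) : ℂ) * Complex.I := by
      have h1 : u = (x:ℂ) * Complex.exp (t * Complex.I) :=
        (Complex.norm_mul_exp_arg_mul_I u).symm
      calc (Rk:ℂ) * u ^ n = (Rk:ℂ) * ((x:ℂ) ^ n * Complex.exp (t * Complex.I) ^ n) := by
            rw [← mul_pow, ← h1]
        _ = (Rk:ℂ) * ((x:ℂ) ^ n * Complex.exp ((θ:ℝ) * Complex.I)) := by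
            rw [← Complex.exp_nat_mul]
            congr 2
            push_cast [hθdef]; ring
        _ = _ := by
            rw [Complex.exp_mul_I]
            push_cast
            ring
    have hre : ((Rk:ℂ) * u ^ n).re = Rk * x ^ n * Real.cos θ := by
      rw [hupow]
      simp only [Complex.add_re, Complex.ofReal_re, Complex.mul_re, Complex.ofReal_im,
        Complex.I_re, Complex.I_im]
      ring
    have him : ((Rk:ℂ) * u ^ n).im = Rk * x ^ n * Real.sin θ := by
      rw [hupow]
      simp only [Complex.add_im, Complex.ofReal_im, Complex.mul_im, Complex.ofReal_re,
        Complex.I_re, Complex.I_im]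
      ring
    set r := |Rk| * x ^ n with hrdef
    have hr0 : 0 ≤ r := by positivity
    have hrx : r ≤ |Rk| * x := by
      rw [hrdef]; exact mul_le_mul_of_nonneg_left hxn_le hRk0.le
    -- |1 + Rk u^n| ≤ 1 - cos κ * r + r^2
    have hw1 : ‖1 + (Rk:ℂ) * u ^ n‖ ≤ 1 - Real.cos κ * r + r^2 := by
      have hrhs : 0 ≤ 1 - Real.cos κ * r + r^2 := by
        have hc2 : Real.cos κ ^ 2 ≤ 1 := Real.cos_sq_le_one κ
        linarith only [sq_nonneg (r - Real.cos κ / 2), hc2]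
      apply aux_sq_le (norm_nonneg _) hrhs
      have hsq : ‖1 + (Rk:ℂ) * u ^ n‖ ^ 2 =
          (1 + Rk * x ^ n * Real.cos θ)^2 + (Rk * x ^ n * Real.sin θ)^2 := by
        rw [Complex.sq_norm, Complex.normSq_apply]
        simp only [Complex.add_re, Complex.one_re, Complex.add_im, Complex.one_im, hre, him]
        ring
      rw [hsq]
      have hsc := Real.sin_sq_add_cos_sq θ
      have h2 : Rk * x ^ n = -r := by rw [hrdef, hRkeq]; ring
      rw [h2]
      have hsc2 : r^2 * (Real.sin θ^2 + Real.cos θ^2) = r^2 * 1 := by rw [hsc]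
      have hint1 : 0 ≤ r * (Real.cos θ - Real.cos κ) :=
        mul_nonneg hr0 (sub_nonneg.2 hcosθ)
      have hint2 : 0 ≤ r^2 * (Real.cos κ - r)^2 :=
        mul_nonneg (sq_nonneg r) (sq_nonneg _)
      have hint3 : 0 ≤ r^2 := sq_nonneg r
      linarith only [hsc2, hint1, hint2, hint3]
    have hEux : ‖E / u‖ ≤ C' * x ^ n * x := by
      rw [norm_div]
      rw [div_le_iff₀ hx0]
      calc ‖E‖ ≤ C' * x ^ (k+1) := hE
        _ = C' * x ^ n * x * x := by rw [hkn]; ring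
    -- real part of z
    have hzreq : z.re = 1 + Rk * x ^ n * Real.cos θ + (E/u).re := by
      rw [hzdef]
      simp only [Complex.add_re, Complex.one_re, hre]
    have hEure : |(E/u).re| ≤ C' * x ^ n * x := le_trans (Complex.abs_re_le_norm _) hEux
    have hCxnx : C' * x ^ n * x ≤ C' * x := by
      calc C' * x ^ n * x = C' * (x * x ^ n) := by ring
        _ ≤ C' * x := by
            apply mul_le_mul_of_nonneg_left _ hC0
            calc x * x ^ n ≤ x * 1 := mul_le_mul_of_nonneg_left
                  (le_trans hxn_le hx1) hx0.le
              _ = x := mul_one x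
    have hRkcos : |Rk * x ^ n * Real.cos θ| ≤ r := by
      rw [abs_mul, abs_mul, abs_of_nonneg (pow_nonneg hx0.le n), hrdef]
      calc |Rk| * x ^ n * |Real.cos θ| ≤ |Rk| * x ^ n * 1 :=
            mul_le_mul_of_nonneg_left (Real.abs_cos_le_one θ) (by positivity)
        _ = |Rk| * x ^ n := mul_one _
    have hzre : 1 - (|Rk| + C') * x ≤ z.re := by
      rw [hzreq]
      have h1 := (abs_le.1 hEure).1
      have h2 := (abs_le.1 hRkcos).1
      linarith only [h1, h2, hCxnx, hrx]
    have hxK : (|Rk| + C') * x ≤ m := by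
      calc (|Rk| + C') * x ≤ K * ρ := mul_le_mul hK1 huρ.le hx0.le hK.le
        _ ≤ m := hρK
    have hzre2 : (1:ℝ)/2 ≤ z.re := by linarith only [hzre, hxK, hm4]
    have hzabs_lb : (1:ℝ)/2 ≤ ‖z‖ := le_trans hzre2 (Complex.re_le_norm z)
    have hz_ne : z ≠ 0 := by
      intro h; rw [h] at hzre2; norm_num at hzre2
    -- |z| ≤ 1 - a x^n
    have hzabs : ‖z‖ ≤ 1 - a * x ^ n := by
      have h1 : ‖z‖ ≤ ‖1 + (Rk:ℂ) * u ^ n‖ + ‖E / u‖ := by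
        rw [hzdef]; exact norm_add_le _ _
      have h2 : (|Rk|^2 + C') * x ≤ b - a := by
        calc (|Rk|^2 + C') * x ≤ K * ρ := mul_le_mul hK2 huρ.le hx0.le hK.le
          _ ≤ m := hρK
          _ ≤ b - a := hmba
      have h3 : x ^ n * x ^ n ≤ x * x ^ n :=
        mul_le_mul_of_nonneg_right hxn_le (pow_nonneg hx0.le n)
      have h4 : r^2 ≤ |Rk|^2 * x * x ^ n := by
        have h5 := mul_le_mul_of_nonneg_left h3 (sq_nonneg (|Rk|))
        calc r^2 = |Rk|^2 * (x ^ n * x ^ n) := by rw [hrdef]; ring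
          _ ≤ |Rk|^2 * (x * x ^ n) := h5
          _ = |Rk|^2 * x * x ^ n := by ring
      have h5 : Real.cos κ * r = b * x ^ n := by rw [hrdef, hbdef]; ring
      have h6 := mul_le_mul_of_nonneg_right h2 (pow_nonneg hx0.le n)
      calc ‖z‖ ≤ 1 - Real.cos κ * r + r^2 + C' * x ^ n * x := by
            linarith only [h1, hw1, hEux]
        _ ≤ 1 - a * x ^ n := by
            rw [h5]
            linarith only [h4, h6]
    have haxn : a * x ^ n ≤ 1/4 := by
      calc a * x ^ n ≤ a * x := mul_le_mul_of_nonneg_left hxn_le ha.le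
        _ ≤ K * ρ := mul_le_mul hK3 huρ.le hx0.le hK.le
        _ ≤ m := hρK
        _ ≤ 1/4 := hm4
    -- norm of R u
    have hRuabs : ‖R u‖ = x * ‖z‖ := by
      rw [← huz, norm_mul]
    have hRupos : 0 < ‖R u‖ := by
      rw [hRuabs]; exact mul_pos hx0 (by linarith only [hzabs_lb])
    have hRule : ‖R u‖ ≤ x * (1 - a * x ^ n) := by
      rw [hRuabs]; exact mul_le_mul_of_nonneg_left hzabs hx0.le
    have haxn0 : (0:ℝ) ≤ a * x ^ n := by positivity
    have hRult : ‖R u‖ < ρ := by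
      calc ‖R u‖ ≤ x * (1 - a * x ^ n) := hRule
        _ ≤ x * 1 := mul_le_mul_of_nonneg_left (by linarith only [haxn0]) hx0.le
        _ = x := mul_one x
        _ < ρ := huρ
    -- argument of z
    have hargz : Complex.arg z = Real.arcsin (z.im / ‖z‖) :=
      Complex.arg_of_re_nonneg (by linarith only [hzre2])
    have hφhalf : |Complex.arg z| ≤ π / 2 := by
      rw [hargz]
      exact abs_le.2 ⟨Real.neg_pi_div_two_le_arcsin _, Real.arcsin_le_pi_div_two _⟩
    have hzim : z.im = Rk * x ^ n * Real.sin θ + (E/u).im := by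
      rw [hzdef]
      simp only [Complex.add_im, Complex.one_im, him]
      ring
    have hEuim : |(E/u).im| ≤ C' * x ^ n * x := le_trans (Complex.abs_im_le_norm _) hEux
    have hzim_abs : |z.im| ≤ (|Rk| + C') * x := by
      rw [hzim]
      have h1 : |Rk * x ^ n * Real.sin θ| ≤ r := by
        rw [abs_mul, abs_mul, abs_of_nonneg (pow_nonneg hx0.le n), hrdef]
        calc |Rk| * x ^ n * |Real.sin θ| ≤ |Rk| * x ^ n * 1 :=
              mul_le_mul_of_nonneg_left (Real.abs_sin_le_one θ) (by positivity)
          _ = |Rk| * x ^ n := mul_one _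
      calc |Rk * x ^ n * Real.sin θ + (E/u).im| ≤
          |Rk * x ^ n * Real.sin θ| + |(E/u).im| := abs_add_le _ _
        _ ≤ (|Rk| + C') * x := by linarith only [h1, hEuim, hrx, hCxnx]
    have hφle : |Complex.arg z| ≤ β / 8 := by
      rw [hargz]
      have h1 := aux_abs_arcsin_le (z.im / ‖z‖)
      have h2 : |z.im / ‖z‖| ≤ 2 * |z.im| := by
        rw [abs_div, abs_of_nonneg (norm_nonneg z)]
        rw [div_le_iff₀ (by linarith only [hzabs_lb] : (0:ℝ) < ‖z‖)]
        have h3 : (0:ℝ) ≤ ‖z‖ - 1/2 := by linarith only [hzabs_lb]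
        linarith only [mul_nonneg (abs_nonneg z.im) h3]
      have h3 : π * ((|Rk| + C') * x) ≤ β / 8 := by
        have h4 : π * ((|Rk| + C') * x) = (π * (|Rk| + C')) * x := by ring
        rw [h4]
        calc (π * (|Rk| + C')) * x ≤ K * ρ := mul_le_mul hK4 huρ.le hx0.le hK.le
          _ ≤ m := hρK
          _ ≤ β / 8 := hmβ
      calc |Real.arcsin (z.im / ‖z‖)| ≤ π / 2 * |z.im / ‖z‖| := h1
        _ ≤ π / 2 * (2 * |z.im|) := mul_le_mul_of_nonneg_left h2 (by positivity)
        _ = π * |z.im| := by ring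
        _ ≤ π * ((|Rk| + C') * x) := mul_le_mul_of_nonneg_left hzim_abs hpi.le
        _ ≤ β / 8 := h3
    have hargRu : Complex.arg (R u) = t + Complex.arg z := by
      rw [← huz]
      apply Complex.arg_mul hu_ne hz_ne
      have h1 := abs_le.1 hφhalf
      have h2 := abs_lt.1 habs_t
      constructor
      · linarith only [h1.1, h2.1, hβπ', hpi]
      · linarith only [h1.2, h2.2, hβπ']
    -- if sin s is small and s in [0, κ] then s ≤ β/8
    have hsin_small : ∀ s : ℝ, 0 ≤ s → s ≤ κ → Real.sin s < C' * x / |Rk| → s ≤ β / 8 := by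
      intro s hs0 hsκ hsin
      have h1 : s ≤ π / 2 * Real.sin s := aux_theta_le hs0 (by linarith only [hsκ, hκπ])
      have h2 : π / 2 * Real.sin s ≤ π / 2 * (C' * x / |Rk|) :=
        mul_le_mul_of_nonneg_left hsin.le (by positivity)
      have h4 : π / 2 * (C' * x / |Rk|) ≤ β / 8 := by
        have h5 : π / 2 * (C' * x / |Rk|) = (π * C' / |Rk|) * x / 2 := by
          field_simp
        rw [h5]
        have h6 : (π * C' / |Rk|) * x ≤ K * ρ := mul_le_mul hK5 huρ.le hx0.le hK.le
        have h7 : (π * C' / |Rk|) * x ≤ β / 8 := le_trans h6 (le_trans hρK hmβ)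
        have h8 : (0:ℝ) ≤ (π * C' / |Rk|) * x := mul_nonneg hterm3 hx0.le
        linarith only [h7, h8, hβ0]
      linarith only [h1, h2, h4]
    have hargRu_bound : |Complex.arg (R u)| < β / 2 := by
      rw [hargRu, abs_lt]
      have hφ := abs_le.1 hφle
      have ht := abs_lt.1 habs_t
      constructor
      · -- lower bound
        rcases le_or_gt 0 z.im with him0 | him0
        · have hφ0 : 0 ≤ Complex.arg z := by
            rw [hargz]
            exact Real.arcsin_nonneg.2 (div_nonneg him0 (norm_nonneg z))
          linarith only [ht.1, hφ0]
        · rcases le_or_gt 0 t with ht0 | ht0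
          · linarith only [ht0, hφ.1, hβ0]
          · have h1 : Rk * x ^ n * Real.sin θ + (E/u).im < 0 := by rw [← hzim]; exact him0
            have h2 : -(C' * x ^ n * x) ≤ (E/u).im := (abs_le.1 hEuim).1
            have h3 : |Rk| * x ^ n * Real.sin (-θ) < C' * x ^ n * x := by
              rw [Real.sin_neg, hRkeq]
              linarith only [h1, h2]
            have h4 : Real.sin (-θ) < C' * x / |Rk| := by
              rw [lt_div_iff₀ hRk0]
              nlinarith only [h3, pow_pos hx0 n]
            have h5 : 0 ≤ -θ := by
              rw [hθdef]
              have := mul_nonneg hn0.le (by linarith only [ht0] : (0:ℝ) ≤ -t)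
              linarith only [this]
            have h6 : -θ ≤ κ := by
              have := abs_le.1 hθκ; linarith only [this]
            have h7 : -θ ≤ β / 8 := hsin_small _ h5 h6 h4
            have h8 : -t ≤ -θ := by
              rw [hθdef]
              have := mul_nonneg (by linarith only [hn1R] : (0:ℝ) ≤ (n:ℝ) - 1)
                (by linarith only [ht0] : (0:ℝ) ≤ -t)
              linarith only [this]
            linarith only [h7, h8, hφ.1, hβ0]
      · -- upper bound
        rcases le_or_gt z.im 0 with him0 | him0
        · have hφ0 : Complex.arg z ≤ 0 := by
            rw [hargz]
            exact Real.arcsin_nonpos.2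
              (div_nonpos_of_nonpos_of_nonneg him0 (norm_nonneg z))
          linarith only [ht.2, hφ0]
        · rcases le_or_gt t 0 with ht0 | ht0
          · linarith only [ht0, hφ.2, hβ0]
          · have h1 : 0 < Rk * x ^ n * Real.sin θ + (E/u).im := by rw [← hzim]; exact him0
            have h2 : (E/u).im ≤ C' * x ^ n * x := (abs_le.1 hEuim).2
            have h3 : |Rk| * x ^ n * Real.sin θ < C' * x ^ n * x := by
              rw [hRkeq]
              linarith only [h1, h2]
            have h4 : Real.sin θ < C' * x / |Rk| := by
              rw [lt_div_iff₀ hRk0]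
              nlinarith only [h3, pow_pos hx0 n]
            have h5 : 0 ≤ θ := by rw [hθdef]; exact mul_nonneg hn0.le ht0.le
            have h6 : θ ≤ κ := by have := abs_le.1 hθκ; linarith only [this]
            have h7 : θ ≤ β / 8 := hsin_small _ h5 h6 h4
            have h8 : t ≤ θ := by
              rw [hθdef]
              have := mul_nonneg (by linarith only [hn1R] : (0:ℝ) ≤ (n:ℝ) - 1) ht0.le
              linarith only [this]
            linarith only [h7, h8, hφ.2, hβ0]
    -- part (B)
    have hB : ‖R u‖ ^ n * (1 + μ * x ^ n) ≤ x ^ n := by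
      have hs0 : 0 < x ^ n := hxn0
      have h8 : ‖R u‖ ^ n ≤ (x * (1 - a * x ^ n)) ^ n :=
        pow_le_pow_left₀ (norm_nonneg _) hRule n
      have h2as : (-2:ℝ) ≤ a * x ^ n := by linarith only [haxn0]
      have hBern : 1 + (n:ℝ) * (a * x ^ n) ≤ (1 + a * x ^ n) ^ n :=
        one_add_mul_le_pow h2as n
      have h10 : (1 - a*x^n) ^ n * (1 + a*x^n) ^ n = (1 - (a*x^n)^2) ^ n := by
        rw [← mul_pow]; congr 1; ring
      have hsq14 : (a*x^n) * (a*x^n) ≤ (1:ℝ)/4 * (a*x^n) :=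
        mul_le_mul_of_nonneg_right haxn haxn0
      have h11 : (1 - (a*x^n)^2) ^ n ≤ 1 := by
        apply pow_le_one₀
        · linarith only [hsq14, haxn, haxn0]
        · linarith only [sq_nonneg (a*x^n)]
      have h12 : (0:ℝ) ≤ (1 - a*x^n) ^ n := pow_nonneg (by linarith only [haxn]) n
      have h9 : (1 - a*x^n) ^ n * (1 + μ * x^n) ≤ 1 := by
        calc (1 - a*x^n) ^ n * (1 + μ * x^n)
            = (1 - a*x^n) ^ n * (1 + (n:ℝ) * (a * x^n)) := by rw [hμa]; ring
          _ ≤ (1 - a*x^n) ^ n * (1 + a*x^n) ^ n := mul_le_mul_of_nonneg_left hBern h12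
          _ = (1 - (a*x^n)^2) ^ n := h10
          _ ≤ 1 := h11
      have hμs : (0:ℝ) ≤ 1 + μ * x ^ n := by
        have := mul_nonneg hμ0.le (pow_nonneg hx0.le n)
        linarith only [this]
      calc ‖R u‖ ^ n * (1 + μ * x ^ n)
          ≤ (x * (1 - a*x^n)) ^ n * (1 + μ * x^n) := mul_le_mul_of_nonneg_right h8 hμs
        _ = x ^ n * ((1 - a*x^n) ^ n * (1 + μ * x^n)) := by rw [mul_pow]; ring
        _ ≤ x ^ n * 1 := mul_le_mul_of_nonneg_left h9 (pow_nonneg hx0.le n)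
        _ = x ^ n := mul_one _
    refine ⟨⟨hargRu_bound, ?_, ?_⟩, ?_⟩
    · exact hRupos
    · exact hRult
    · exact hB
  -- iterates
  have hiter : ∀ u ∈ Sector β ρ, ∀ j : ℕ, R^[j] u ∈ Sector β ρ ∧
      ‖R^[j] u‖ ^ n * (1 + (j:ℝ) * μ * ‖u‖ ^ n) ≤ ‖u‖ ^ n := by
    intro u hu j
    induction j with
    | zero =>
      refine ⟨by simpa using hu, ?_⟩
      simp
    | succ j ih =>
      obtain ⟨hmem, hineq⟩ := ih
      have hs := hstep _ hmem
      refine ⟨by rw [Function.iterate_succ_apply']; exact hs.1, ?_⟩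
      rw [Function.iterate_succ_apply']
      push_cast
      exact aux_iter hμ0 (pow_nonneg (norm_nonneg u) n)
        (pow_nonneg (norm_nonneg _) n) (pow_nonneg (norm_nonneg _) n) j hs.2 hineq
  refine ⟨ρ, hρ0, fun u hu => (hstep u hu).1, ?_⟩
  intro u hu j
  obtain ⟨hmem, hineq⟩ := hiter u hu j
  rw [hnR]
  have hA0 : (0:ℝ) ≤ ‖R^[j] u‖ := norm_nonneg _
  have hB0 : (0:ℝ) ≤ ‖u‖ := norm_nonneg _
  have hD0 : (0:ℝ) < 1 + (j:ℝ) * μ * ‖u‖ ^ n := by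
    have : (0:ℝ) ≤ (j:ℝ) * μ * ‖u‖ ^ n := by positivity
    linarith only [this]
  have hAn : ‖R^[j] u‖ ^ n ≤ ‖u‖ ^ n / (1 + (j:ℝ) * μ * ‖u‖ ^ n) :=
    (le_div_iff₀ hD0).2 hineq
  have hinv0 : (0:ℝ) ≤ ((n:ℝ))⁻¹ := by positivity
  have h1 : ((‖R^[j] u‖ ^ n : ℝ)) ^ ((n:ℝ)⁻¹) ≤
      ((‖u‖ ^ n / (1 + (j:ℝ) * μ * ‖u‖ ^ n) : ℝ)) ^ ((n:ℝ)⁻¹) :=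
    Real.rpow_le_rpow (pow_nonneg hA0 n) hAn hinv0
  have hroot : ∀ y : ℝ, 0 ≤ y → ((y ^ n : ℝ)) ^ ((n:ℝ)⁻¹) = y := by
    intro y hy
    rw [← Real.rpow_natCast y n, ← Real.rpow_mul hy, mul_inv_cancel₀ (ne_of_gt hn0),
      Real.rpow_one]
  rw [hroot _ hA0] at h1
  rw [Real.div_rpow (pow_nonneg hB0 n) hD0.le, hroot _ hB0] at h1
  exact h1
end

section
/- Let R(u,θ) = (R^x(u), θ+ω) where R^x : S(β,ρ) → S(β,ρ) is analytic and satisfies |（R^x)^j(u)| ≤ |u|/(1 + jμ|u|^{k−1})^{1/(k−1)} for all j ≥ 0, some μ > 0, and k ≥ 2. Define the operator S_{n,R} f = f∘R − f on W_n. Then for η ∈ W_{n+k−1} with n ≥ 1, the series S⁻¹η := −Σ_{j≥0} η∘R^j converges in W_n, satisfies S_{n,R}(S⁻¹η) = η, and ‖S⁻¹η‖_n ≤ (ρ^{k−1} + (1/μ)·(k−1)/n) ‖η‖_{n+k−1}. -/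
open Real

lemma step_ineq {a q x : ℝ} (ha : 0 < a) (hq : 0 < q) (hx : 1 ≤ x) :
    a * q * (x + a) ^ (-(1 + q)) ≤ x ^ (-q) - (x + a) ^ (-q) := by
  have hx0 : 0 < x := lt_of_lt_of_le one_pos hx
  have hy0 : 0 < x + a := by linarith
  have hxy : x ≤ x + a := by linarith
  have hX : 0 < x ^ q := Real.rpow_pos_of_pos hx0 q
  have hY : 0 < (x + a) ^ q := Real.rpow_pos_of_pos hy0 q
  have key : a * q * x ^ q ≤ (x + a) * ((x + a) ^ q - x ^ q) := by
    rcases le_or_gt 1 q with h1 | h1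
    · have hs : (0:ℝ) ≤ a / x := by positivity
      have hb : 1 + q * (a / x) ≤ (1 + a / x) ^ q :=
        one_add_mul_self_le_rpow_one_add (by linarith) h1
      have hfac : (x + a) ^ q = x ^ q * (1 + a / x) ^ q := by
        rw [← Real.mul_rpow hx0.le (by linarith)]
        congr 1
        field_simp
      have h3 : q * a * x ^ q / x ≤ (x + a) ^ q - x ^ q := by
        rw [hfac]
        have h := mul_le_mul_of_nonneg_left hb hX.le
        have e : x ^ q * (1 + q * (a / x)) = x ^ q + q * a * x ^ q / x := by
          field_simp
        rw [e] at h
        linarith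
      have e2 : x * (q * a * x ^ q / x) = a * q * x ^ q := by
        rw [← mul_div_assoc, mul_comm x (q * a * x ^ q), mul_div_assoc,
          div_self hx0.ne', mul_one]; ring
      calc a * q * x ^ q = x * (q * a * x ^ q / x) := e2.symm
        _ ≤ (x + a) * ((x + a) ^ q - x ^ q) :=
            mul_le_mul hxy h3 (by positivity) hy0.le
    · have hs : a / (x + a) ≤ 1 := by
        rw [div_le_one hy0]; linarith
      have hb : (1 + -(a / (x + a))) ^ q ≤ 1 + q * -(a / (x + a)) :=
        rpow_one_add_le_one_add_mul_self (by linarith) hq.le h1.le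
      have hfac : (1 + -(a / (x + a))) ^ q = x ^ q / (x + a) ^ q := by
        rw [← Real.div_rpow hx0.le hy0.le]
        congr 1
        field_simp
        ring
      rw [hfac] at hb
      have h := mul_le_mul_of_nonneg_right hb hY.le
      rw [div_mul_cancel₀ _ hY.ne'] at h
      have e : (1 + q * -(a / (x + a))) * (x + a) ^ q
          = (x + a) ^ q - q * a * (x + a) ^ q / (x + a) := by
        field_simp; ring
      rw [e] at h
      have h4 : q * a * (x + a) ^ q / (x + a) ≤ (x + a) ^ q - x ^ q := by linarith
      have hXY : x ^ q ≤ (x + a) ^ q := Real.rpow_le_rpow hx0.le hxy hq.le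
      have e2 : (x + a) * (q * a * (x + a) ^ q / (x + a)) = a * q * (x + a) ^ q := by
        rw [← mul_div_assoc, mul_comm (x + a) (q * a * (x + a) ^ q), mul_div_assoc,
          div_self hy0.ne', mul_one]; ring
      calc a * q * x ^ q ≤ a * q * (x + a) ^ q :=
            mul_le_mul_of_nonneg_left hXY (by positivity)
        _ = (x + a) * (q * a * (x + a) ^ q / (x + a)) := e2.symm
        _ ≤ (x + a) * ((x + a) ^ q - x ^ q) :=
            mul_le_mul_of_nonneg_left h4 hy0.le
  have hyq : (x + a) ^ (-(1 + q)) = ((x + a) * (x + a) ^ q)⁻¹ := by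
    rw [Real.rpow_neg hy0.le, Real.rpow_add hy0, Real.rpow_one]
  have hxq : x ^ (-q) = (x ^ q)⁻¹ := Real.rpow_neg hx0.le q
  have hyq' : (x + a) ^ (-q) = ((x + a) ^ q)⁻¹ := Real.rpow_neg hy0.le q
  rw [hyq, hxq, hyq']
  rw [mul_inv_le_iff₀ (by positivity)]
  have expand : ((x ^ q)⁻¹ - ((x + a) ^ q)⁻¹) * ((x + a) * (x + a) ^ q)
      = (x + a) * ((x + a) ^ q - x ^ q) * (x ^ q)⁻¹ := by
    field_simp
  rw [expand]
  calc a * q = a * q * x ^ q * (x ^ q)⁻¹ := by field_simp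
    _ ≤ (x + a) * ((x + a) ^ q - x ^ q) * (x ^ q)⁻¹ :=
        mul_le_mul_of_nonneg_right key (by positivity)

lemma sum_bound {a q : ℝ} (ha : 0 < a) (hq : 0 < q) (N : ℕ) :
    ∑ j ∈ Finset.range N, (1 + (j : ℝ) * a) ^ (-(1 + q)) ≤ 1 + 1 / (a * q) := by
  have tel : ∀ M : ℕ, ∑ j ∈ Finset.range M, (1 + ((j : ℝ) + 1) * a) ^ (-(1 + q))
      ≤ (1 - (1 + (M : ℝ) * a) ^ (-q)) / (a * q) := by
    intro M
    induction M with
    | zero => simp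
    | succ M ih =>
      rw [Finset.sum_range_succ]
      have hx : (1:ℝ) ≤ 1 + (M : ℝ) * a := by
        have : (0:ℝ) ≤ (M : ℝ) * a := by positivity
        linarith
      have hstep := step_ineq ha hq hx
      have hcast : (1 + (M : ℝ) * a) + a = 1 + ((M : ℝ) + 1) * a := by ring
      rw [hcast] at hstep
      have hterm : (1 + ((M : ℝ) + 1) * a) ^ (-(1 + q))
          ≤ ((1 + (M : ℝ) * a) ^ (-q) - (1 + ((M : ℝ) + 1) * a) ^ (-q)) / (a * q) := by
        rw [le_div_iff₀ (by positivity)]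
        calc (1 + ((M : ℝ) + 1) * a) ^ (-(1 + q)) * (a * q)
            = a * q * (1 + ((M : ℝ) + 1) * a) ^ (-(1 + q)) := by ring
          _ ≤ _ := hstep
      push_cast
      calc _ ≤ (1 - (1 + (M : ℝ) * a) ^ (-q)) / (a * q)
            + ((1 + (M : ℝ) * a) ^ (-q) - (1 + ((M : ℝ) + 1) * a) ^ (-q)) / (a * q) :=
            add_le_add ih hterm
        _ = (1 - (1 + ((M : ℝ) + 1) * a) ^ (-q)) / (a * q) := by ring
  cases N with
  | zero => simp; positivity
  | succ M =>
    rw [Finset.sum_range_succ']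
    have h0 : (1 + ((0:ℕ) : ℝ) * a) ^ (-(1 + q)) = 1 := by simp
    rw [h0]
    have he : ∑ j ∈ Finset.range M, (1 + ((j + 1 : ℕ) : ℝ) * a) ^ (-(1 + q))
        = ∑ j ∈ Finset.range M, (1 + ((j : ℝ) + 1) * a) ^ (-(1 + q)) := by
      apply Finset.sum_congr rfl; intro j _; push_cast; ring_nf
    rw [he]
    have hg : 0 ≤ (1 + (M : ℝ) * a) ^ (-q) :=
      Real.rpow_nonneg (by positivity) _
    have h1 : (1 - (1 + (M : ℝ) * a) ^ (-q)) / (a * q) ≤ 1 / (a * q) := by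
      gcongr
      linarith
    linarith [tel M]

/-- The complex torus `𝕋^d_σ`, lifted to `ℂ^d`. -/
def CTorus (d : ℕ) (σ : ℝ) : Set (Fin d → ℂ) :=
  {θ | ∀ i, |(θ i).im| < σ}

/-- **Right inverse of `S_{n,R} f = f∘R − f` in the map setting:** given
`R(u,θ) = (R^x(u), θ+ω)` whose iterates satisfy the parabolic contraction bound, and
`η ∈ W_{n+k-1}` (i.e. `‖η(u,θ)‖ ≤ C |u|^{n+k-1}` on the domain), the series
`S⁻¹η = −Σ_{j≥0} η∘R^j` converges, satisfies `(S⁻¹η)∘R − S⁻¹η = η`, and obeys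
`‖(S⁻¹η)(u,θ)‖ ≤ (ρ^{k-1} + (1/μ)(k-1)/n) C |u|^n`. -/
theorem stmt6 (d n k : ℕ) (hn : 1 ≤ n) (hk : 2 ≤ k) (β ρ σ μ : ℝ)
    (hρ : 0 < ρ) (hμ : 0 < μ) (ω : Fin d → ℝ)
    (Rx : ℂ → ℂ) (hmap : Set.MapsTo Rx (Sector β ρ) (Sector β ρ))
    (hiter : ∀ u ∈ Sector β ρ, ∀ j : ℕ,
      ‖Rx^[j] u‖ ≤ ‖u‖ / (1 + (j : ℝ) * μ * ‖u‖ ^ (k - 1)) ^ (((k : ℝ) - 1)⁻¹))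
    (η : ℂ × (Fin d → ℂ) → ℂ) (C : ℝ)
    (hη : ∀ p ∈ Sector β ρ ×ˢ CTorus d σ, ‖η p‖ ≤ C * ‖p.1‖ ^ (n + k - 1))
    (R : ℂ × (Fin d → ℂ) → ℂ × (Fin d → ℂ))
    (hR : ∀ p, R p = (Rx p.1, p.2 + fun i => ((ω i : ℝ) : ℂ))) :
    ∀ p ∈ Sector β ρ ×ˢ CTorus d σ,
      (Summable fun j : ℕ => η (R^[j] p)) ∧
      ((-∑' j : ℕ, η (R^[j] (R p))) - (-∑' j : ℕ, η (R^[j] p)) = η p) ∧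
      ‖-∑' j : ℕ, η (R^[j] p)‖ ≤
        (ρ ^ (k - 1) + (1 / μ) * (((k : ℝ) - 1) / n)) * C * ‖p.1‖ ^ n := by
  intro p hp
  have hu : p.1 ∈ Sector β ρ := hp.1
  have hθ : p.2 ∈ CTorus d σ := hp.2
  have hu0 : 0 < ‖p.1‖ := hu.2.1
  have huρ : ‖p.1‖ < ρ := hu.2.2
  obtain ⟨κ, hκdef⟩ : ∃ κ : ℝ, κ = (k : ℝ) - 1 := ⟨_, rfl⟩
  have hκ : 1 ≤ κ := by
    have : (2:ℝ) ≤ (k:ℝ) := by exact_mod_cast hk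
    rw [hκdef]; linarith
  have hκ0 : 0 < κ := lt_of_lt_of_le one_pos hκ
  obtain ⟨a, hadef⟩ : ∃ a : ℝ, a = μ * ‖p.1‖ ^ (k - 1) := ⟨_, rfl⟩
  have ha : 0 < a := hadef ▸ mul_pos hμ (pow_pos hu0 _)
  have hn0 : (0:ℝ) < (n : ℝ) := by exact_mod_cast Nat.lt_of_lt_of_le Nat.zero_lt_one hn
  obtain ⟨q, hqdef⟩ : ∃ q : ℝ, q = (n : ℝ) / κ := ⟨_, rfl⟩
  have hq : 0 < q := hqdef ▸ div_pos hn0 hκ0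
  have hmcast : ((n + k - 1 : ℕ) : ℝ) = (n : ℝ) + κ := by
    have h1 : n + k - 1 = n + (k - 1) := by omega
    rw [h1, Nat.cast_add, Nat.cast_sub (by omega : 1 ≤ k), Nat.cast_one, hκdef]
  have hC : 0 ≤ C := by
    have h := hη p hp
    have h2 : (0:ℝ) < ‖p.1‖ ^ (n + k - 1) := pow_pos hu0 _
    nlinarith [norm_nonneg (η p)]
  -- iterate structure
  have hco : ∀ j : ℕ, (R^[j] p).1 = Rx^[j] p.1 ∧ R^[j] p ∈ Sector β ρ ×ˢ CTorus d σ := by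
    intro j
    induction j with
    | zero => exact ⟨rfl, hp⟩
    | succ j ih =>
      obtain ⟨h1, h2⟩ := ih
      have h2s : (R^[j] p).1 ∈ Sector β ρ := h2.1
      have h2t : (R^[j] p).2 ∈ CTorus d σ := h2.2
      rw [Function.iterate_succ_apply', Function.iterate_succ_apply', hR]
      constructor
      · simp only [h1]
      · refine Set.mem_prod.2 ⟨hmap h2s, ?_⟩
        intro i
        simp only [Pi.add_apply, Complex.add_im, Complex.ofReal_im, add_zero]
        exact h2t i
  -- pointwise bound on the terms
  have hterm : ∀ j : ℕ, ‖η (R^[j] p)‖ ≤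
      C * ‖p.1‖ ^ (n + k - 1) * (1 + (j:ℝ) * a) ^ (-(1 + q)) := by
    intro j
    obtain ⟨h1, h2⟩ := hco j
    have hb1 : ‖η (R^[j] p)‖ ≤ C * ‖(R^[j] p).1‖ ^ (n + k - 1) := hη _ h2
    rw [h1] at hb1
    have hiterj := hiter p.1 hu j
    have hja : (j:ℝ) * μ * ‖p.1‖ ^ (k - 1) = (j:ℝ) * a := by rw [hadef]; ring
    rw [hja, ← hκdef] at hiterj
    have hja0 : (0:ℝ) ≤ (j:ℝ) * a := by positivity
    have h1ja : (1:ℝ) ≤ 1 + (j:ℝ) * a := by linarith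
    have hκinv : (0:ℝ) ≤ κ⁻¹ := by positivity
    have hD1 : (1:ℝ) ≤ (1 + (j:ℝ) * a) ^ (κ⁻¹) := by
      calc (1:ℝ) = (1:ℝ) ^ (κ⁻¹) := (Real.one_rpow _).symm
        _ ≤ _ := Real.rpow_le_rpow zero_le_one h1ja hκinv
    have hpow : ‖Rx^[j] p.1‖ ^ (n + k - 1) ≤
        (‖p.1‖ / (1 + (j:ℝ) * a) ^ (κ⁻¹)) ^ (n + k - 1) :=
      pow_le_pow_left₀ (norm_nonneg _) hiterj _
    have hDm : ((1 + (j:ℝ) * a) ^ (κ⁻¹)) ^ (n + k - 1) = (1 + (j:ℝ) * a) ^ (1 + q) := by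
      rw [← Real.rpow_natCast ((1 + (j:ℝ) * a) ^ (κ⁻¹)) (n + k - 1),
        ← Real.rpow_mul (by linarith)]
      congr 1
      rw [hmcast, hqdef]
      field_simp
      ring
    have hkey : (‖p.1‖ / (1 + (j:ℝ) * a) ^ (κ⁻¹)) ^ (n + k - 1)
        = ‖p.1‖ ^ (n + k - 1) * (1 + (j:ℝ) * a) ^ (-(1 + q)) := by
      rw [div_pow, hDm, Real.rpow_neg (by linarith), div_eq_mul_inv]
    calc ‖η (R^[j] p)‖ ≤ C * ‖Rx^[j] p.1‖ ^ (n + k - 1) := hb1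
      _ ≤ C * (‖p.1‖ ^ (n + k - 1) * (1 + (j:ℝ) * a) ^ (-(1 + q))) := by
          rw [← hkey]; exact mul_le_mul_of_nonneg_left hpow hC
      _ = C * ‖p.1‖ ^ (n + k - 1) * (1 + (j:ℝ) * a) ^ (-(1 + q)) := by ring
  have hKnn : (0:ℝ) ≤ C * ‖p.1‖ ^ (n + k - 1) := mul_nonneg hC (pow_nonneg (norm_nonneg _) _)
  have hpsum : ∀ N : ℕ, ∑ j ∈ Finset.range N, ‖η (R^[j] p)‖ ≤
      C * ‖p.1‖ ^ (n + k - 1) * (1 + 1 / (a * q)) := by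
    intro N
    calc ∑ j ∈ Finset.range N, ‖η (R^[j] p)‖
        ≤ ∑ j ∈ Finset.range N, C * ‖p.1‖ ^ (n + k - 1) * (1 + (j:ℝ) * a) ^ (-(1 + q)) :=
          Finset.sum_le_sum fun j _ => hterm j
      _ = C * ‖p.1‖ ^ (n + k - 1) * ∑ j ∈ Finset.range N, (1 + (j:ℝ) * a) ^ (-(1 + q)) := by
          rw [Finset.mul_sum]
      _ ≤ C * ‖p.1‖ ^ (n + k - 1) * (1 + 1 / (a * q)) :=
          mul_le_mul_of_nonneg_left (sum_bound ha hq N) hKnn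
  have hsumnorm : Summable fun j : ℕ => ‖η (R^[j] p)‖ :=
    summable_of_sum_range_le (fun _ => norm_nonneg _) hpsum
  have hsummable : Summable fun j : ℕ => η (R^[j] p) := hsumnorm.of_norm
  refine ⟨hsummable, ?_, ?_⟩
  · have hzero : ∑' j : ℕ, η (R^[j] p) = η (R^[0] p) + ∑' j : ℕ, η (R^[j + 1] p) :=
      Summable.tsum_eq_zero_add hsummable
    rw [Function.iterate_zero_apply] at hzero
    have hshift : ∑' j : ℕ, η (R^[j] (R p)) = ∑' j : ℕ, η (R^[j + 1] p) := by
      apply tsum_congr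
      intro j
      rw [← Function.iterate_succ_apply]
    rw [hshift, hzero]
    ring
  · have htn : ∑' j : ℕ, ‖η (R^[j] p)‖ ≤ C * ‖p.1‖ ^ (n + k - 1) * (1 + 1 / (a * q)) :=
      Real.tsum_le_of_sum_range_le (fun _ => norm_nonneg _) hpsum
    have h1 : ‖-∑' j : ℕ, η (R^[j] p)‖ ≤ C * ‖p.1‖ ^ (n + k - 1) * (1 + 1 / (a * q)) := by
      rw [norm_neg]
      exact (norm_tsum_le_tsum_norm hsumnorm).trans htn
    refine h1.trans ?_
    have hv : (0:ℝ) < ‖p.1‖ ^ (k - 1) := pow_pos hu0 _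
    have hsplit : ‖p.1‖ ^ (n + k - 1) = ‖p.1‖ ^ n * ‖p.1‖ ^ (k - 1) := by
      rw [← pow_add]; congr 1; omega
    have halg0 : ∀ v : ℝ, 0 < v →
        v * (1 + 1 / (μ * v * ((n:ℝ) / κ))) = v + κ / (μ * (n:ℝ)) := by
      intro v hv0
      field_simp
    have haq : a * q = μ * ‖p.1‖ ^ (k - 1) * ((n:ℝ) / κ) := by rw [hadef, hqdef]
    have halg : ‖p.1‖ ^ (k - 1) * (1 + 1 / (a * q)) = ‖p.1‖ ^ (k - 1) + κ / (μ * n) := by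
      rw [haq]
      exact halg0 _ hv
    have hub : ‖p.1‖ ^ (k - 1) ≤ ρ ^ (k - 1) := pow_le_pow_left₀ (norm_nonneg _) huρ.le _
    have hfrac : κ / (μ * (n:ℝ)) = (1 / μ) * (κ / (n:ℝ)) := by ring
    have hle : ‖p.1‖ ^ (k - 1) + κ / (μ * n) ≤ ρ ^ (k - 1) + (1 / μ) * (κ / (n:ℝ)) := by
      rw [← hfrac]; linarith
    have hCn : (0:ℝ) ≤ C * ‖p.1‖ ^ n := mul_nonneg hC (pow_nonneg (norm_nonneg _) _)
    calc C * ‖p.1‖ ^ (n + k - 1) * (1 + 1 / (a * q))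
        = C * ‖p.1‖ ^ n * (‖p.1‖ ^ (k - 1) * (1 + 1 / (a * q))) := by rw [hsplit]; ring
      _ = C * ‖p.1‖ ^ n * (‖p.1‖ ^ (k - 1) + κ / (μ * n)) := by rw [halg]
      _ ≤ C * ‖p.1‖ ^ n * (ρ ^ (k - 1) + (1 / μ) * (κ / (n:ℝ))) :=
          mul_le_mul_of_nonneg_left hle hCn
      _ = (ρ ^ (k - 1) + (1 / μ) * (((k:ℝ) - 1) / (n:ℝ))) * C * ‖p.1‖ ^ n := by
          rw [hκdef]; ring
end

section
/- Let η ∈ W_{n+k−1} and R as above with iterate bound |(R^x)^j(u)| ≤ |u|/(1+jμ|u|^{k−1})^{1/(k−1)}. Then for every (u,θ) ∈ S(β,ρ)×𝕋^d_σ, Σ_{j=0}^∞ |η(R^j(u,θ))| ≤ ‖η‖_{n+k−1} |u|^n ( |u|^{k−1} + (k−1)/(μ n) ); in particular the series defining −Σ_j η∘R^j converges absolutely and uniformly on the domain. -/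
lemma key_ineq (r : ℝ) (hr : 0 ≤ r) (a b : ℝ) (ha : 0 < a) (hab : a ≤ b) :
    r * (b - a) * b ^ (-(r+1)) ≤ a ^ (-r) - b ^ (-r) := by
  have hb : 0 < b := lt_of_lt_of_le ha hab
  set x : ℝ := a / b with hxdef
  have hx : 0 < x := div_pos ha hb
  have hx1 : x ≤ 1 := (div_le_one hb).mpr hab
  have hlog : 1 - x ≤ -Real.log x := by
    have := Real.log_le_sub_one_of_pos hx
    linarith
  have hbern : 1 + r * (1 - x) ≤ x ^ (-r) := by
    rw [Real.rpow_def_of_pos hx]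
    calc 1 + r * (1 - x) ≤ Real.exp (r * (1 - x)) := by
          have := Real.add_one_le_exp (r * (1 - x)); linarith
      _ ≤ Real.exp (Real.log x * -r) := by
          apply Real.exp_le_exp.mpr
          have : r * (1 - x) ≤ r * (-Real.log x) := mul_le_mul_of_nonneg_left hlog hr
          nlinarith
  have hax : a = x * b := by rw [hxdef]; field_simp
  have hmul : a ^ (-r) = x ^ (-r) * b ^ (-r) := by
    rw [hax, Real.mul_rpow hx.le hb.le]
  have hbpos : (0:ℝ) < b ^ (-r) := Real.rpow_pos_of_pos hb _
  have hsplit : b ^ (-(r+1)) = b ^ (-r) / b := by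
    rw [show -(r+1) = -r + (-1) by ring, Real.rpow_add hb, Real.rpow_neg_one]
    ring
  rw [hmul, hsplit]
  have h1 : r * (1 - x) * b ^ (-r) ≤ (x ^ (-r) - 1) * b ^ (-r) := by
    apply mul_le_mul_of_nonneg_right _ hbpos.le
    linarith
  have hxe : r * (b - a) / b = r * (1 - x) := by
    rw [hxdef]; field_simp
  calc r * (b - a) * (b ^ (-r) / b) = (r * (b - a) / b) * b ^ (-r) := by ring
    _ = r * (1 - x) * b ^ (-r) := by rw [hxe]
    _ ≤ (x ^ (-r) - 1) * b ^ (-r) := h1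
    _ = x ^ (-r) * b ^ (-r) - b ^ (-r) := by ring

/-- **Absolute convergence estimate for the series `Σ_j η∘R^j`:** under the parabolic
iterate bound `|(R^x)^j(u)| ≤ |u|/(1+jμ|u|^{k-1})^{1/(k-1)}` and `‖η(u,θ)‖ ≤ C|u|^{n+k-1}`,
one has `Σ_{j=0}^∞ |η(R^j(u,θ))| ≤ C |u|^n (|u|^{k-1} + (k-1)/(μn))` for every point of
the domain; in particular the series converges absolutely. -/
theorem stmt7 (d n k : ℕ) (hn : 1 ≤ n) (hk : 2 ≤ k) (β ρ σ μ : ℝ)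
    (hρ : 0 < ρ) (hμ : 0 < μ) (ω : Fin d → ℝ)
    (Rx : ℂ → ℂ) (hmap : Set.MapsTo Rx (Sector β ρ) (Sector β ρ))
    (hiter : ∀ u ∈ Sector β ρ, ∀ j : ℕ,
      ‖Rx^[j] u‖ ≤ ‖u‖ / (1 + (j : ℝ) * μ * ‖u‖ ^ (k - 1)) ^ (((k : ℝ) - 1)⁻¹))
    (η : ℂ × (Fin d → ℂ) → ℂ) (C : ℝ) (hC : 0 ≤ C)
    (hη : ∀ p ∈ Sector β ρ ×ˢ CTorus d σ, ‖η p‖ ≤ C * ‖p.1‖ ^ (n + k - 1))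
    (R : ℂ × (Fin d → ℂ) → ℂ × (Fin d → ℂ))
    (hR : ∀ p, R p = (Rx p.1, p.2 + fun i => ((ω i : ℝ) : ℂ))) :
    ∀ p ∈ Sector β ρ ×ˢ CTorus d σ,
      (Summable fun j : ℕ => ‖η (R^[j] p)‖) ∧
      ∑' j : ℕ, ‖η (R^[j] p)‖ ≤
        C * ‖p.1‖ ^ n * (‖p.1‖ ^ (k - 1) + ((k : ℝ) - 1) / (μ * n)) := by
  intro p hp
  obtain ⟨hp1, hp2⟩ := hp
  set u : ℂ := p.1 with hu
  have hupos : 0 < ‖u‖ := hp1.2.1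
  set t : ℝ := ‖u‖ ^ (k - 1) with htdef
  have ht : 0 < t := pow_pos hupos _
  have hk1 : (0:ℝ) < (k:ℝ) - 1 := by
    have : (2:ℝ) ≤ (k:ℝ) := by exact_mod_cast hk
    linarith
  set r : ℝ := (n:ℝ) / ((k:ℝ) - 1) with hrdef
  have hnpos : (0:ℝ) < (n:ℝ) := by exact_mod_cast hn
  have hr : 0 < r := div_pos hnpos hk1
  set m : ℕ := n + k - 1 with hmdef
  have hmcast : (m:ℝ) = (n:ℝ) + (k:ℝ) - 1 := by
    have : m = n + (k - 1) := by omega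
    rw [this]
    push_cast [Nat.cast_sub (by omega : 1 ≤ k)]
    ring
  -- structure of the iterates
  have hcomp : ∀ j : ℕ, (R^[j] p).1 = Rx^[j] u ∧
      ∀ i, ((R^[j] p).2 i).im = (p.2 i).im := by
    intro j
    induction j with
    | zero => simp [hu]
    | succ j ih =>
      rw [Function.iterate_succ_apply', Function.iterate_succ_apply', hR]
      constructor
      · simp [ih.1]
      · intro i
        simp [Complex.add_im, Complex.ofReal_im, ih.2 i]
  have hmem : ∀ j : ℕ, R^[j] p ∈ Sector β ρ ×ˢ CTorus d σ := by
    intro j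
    constructor
    · rw [(hcomp j).1]
      exact hmap.iterate j hp1
    · intro i
      rw [(hcomp j).2 i]
      exact hp2 i
  -- the decreasing denominators
  set D : ℕ → ℝ := fun j => 1 + (j:ℝ) * μ * t with hDdef
  have hD1 : ∀ j, 1 ≤ D j := by
    intro j
    have : 0 ≤ (j:ℝ) * μ * t := by positivity
    simp only [hDdef]; linarith
  have hDpos : ∀ j, 0 < D j := fun j => lt_of_lt_of_le one_pos (hD1 j)
  set A : ℝ := C * ‖u‖ ^ m with hAdef
  have hA : 0 ≤ A := by positivity
  -- termwise bound
  have hB : ∀ j : ℕ, ‖η (R^[j] p)‖ ≤ A * (D j) ^ (-(r+1)) := by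
    intro j
    have h1 : ‖η (R^[j] p)‖ ≤ C * ‖Rx^[j] u‖ ^ m := by
      have := hη _ (hmem j)
      rwa [(hcomp j).1] at this
    have h2 : ‖Rx^[j] u‖ ^ m ≤ (‖u‖ / (D j) ^ (((k:ℝ) - 1)⁻¹)) ^ m :=
      pow_le_pow_left₀ (norm_nonneg _) (hiter u hp1 j) m
    have h3 : (‖u‖ / (D j) ^ (((k:ℝ) - 1)⁻¹)) ^ m = ‖u‖ ^ m * (D j) ^ (-(r+1)) := by
      rw [div_pow, ← Real.rpow_natCast ((D j) ^ (((k:ℝ) - 1)⁻¹)) m,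
        ← Real.rpow_mul (hDpos j).le]
      have hexp : ((k:ℝ) - 1)⁻¹ * (m:ℝ) = r + 1 := by
        rw [hmcast, hrdef]
        field_simp
        ring
      rw [hexp, Real.rpow_neg (hDpos j).le, div_eq_mul_inv]
    calc ‖η (R^[j] p)‖ ≤ C * ‖Rx^[j] u‖ ^ m := h1
      _ ≤ C * (‖u‖ / (D j) ^ (((k:ℝ) - 1)⁻¹)) ^ m := by
          exact mul_le_mul_of_nonneg_left h2 hC
      _ = A * (D j) ^ (-(r+1)) := by rw [h3, hAdef]; ring
  -- the telescoping majorant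
  set g : ℕ → ℝ := fun j => (D j) ^ (-r) with hgdef
  have hganti : ∀ j, g (j+1) ≤ g j := by
    intro j
    have hDle : D j ≤ D (j+1) := by
      simp only [hDdef]
      have : (j:ℝ) ≤ (j:ℝ) + 1 := by linarith
      push_cast
      nlinarith [hμ.le, ht.le]
    simp only [hgdef]
    rw [Real.rpow_neg (hDpos j).le, Real.rpow_neg (hDpos (j+1)).le]
    apply inv_anti₀ (Real.rpow_pos_of_pos (hDpos j) _)
    exact Real.rpow_le_rpow (hDpos j).le hDle hr.le
  have hgpos : ∀ j, 0 < g j := fun j => Real.rpow_pos_of_pos (hDpos j) _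
  have hg0 : g 0 = 1 := by simp [hgdef, hDdef]
  have hgtend : Filter.Tendsto g Filter.atTop (nhds 0) := by
    have h1 : Filter.Tendsto D Filter.atTop Filter.atTop := by
      simp only [hDdef]
      apply Filter.tendsto_atTop_add_const_left
      exact (tendsto_natCast_atTop_atTop.atTop_mul_const hμ).atTop_mul_const ht
    have h2 : Filter.Tendsto (fun x : ℝ => x ^ (-r)) Filter.atTop (nhds 0) :=
      tendsto_rpow_neg_atTop hr
    exact h2.comp h1
  have htele : HasSum (fun j : ℕ => g j - g (j+1)) 1 := by
    rw [hasSum_iff_tendsto_nat_of_nonneg (fun j => by linarith [hganti j])]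
    have : ∀ N : ℕ, ∑ j ∈ Finset.range N, (g j - g (j+1)) = g 0 - g N :=
      fun N => Finset.sum_range_sub' g N
    simp only [this, hg0]
    have := (tendsto_const_nhds (x := (1:ℝ)) (f := Filter.atTop)).sub hgtend
    simpa using this
  -- the constant c
  set c : ℝ := A / (r * μ * t) with hcdef
  have hc : 0 ≤ c := by positivity
  -- step bound for j ≥ 1
  have hstep : ∀ j : ℕ, A * (D (j+1)) ^ (-(r+1)) ≤ c * (g j - g (j+1)) := by
    intro j
    have hab : D j ≤ D (j+1) := by
      simp only [hDdef]; push_cast; nlinarith [hμ.le, ht.le]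
    have hdiff : D (j+1) - D j = μ * t := by
      simp only [hDdef]; push_cast; ring
    have := key_ineq r hr.le (D j) (D (j+1)) (hDpos j) hab
    rw [hdiff] at this
    -- this : r * (μ * t) * (D (j+1)) ^ (-(r+1)) ≤ g j - g (j+1)
    have hrt : 0 < r * μ * t := by positivity
    rw [hcdef, div_mul_eq_mul_div, le_div_iff₀ hrt]
    calc A * D (j+1) ^ (-(r+1)) * (r * μ * t)
        = A * (r * (μ * t) * (D (j+1)) ^ (-(r+1))) := by ring
      _ ≤ A * (g j - g (j+1)) := mul_le_mul_of_nonneg_left this hA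
  -- summability
  have htsum : Summable (fun j : ℕ => c * (g j - g (j+1))) := htele.summable.mul_left c
  have hFnonneg : ∀ j : ℕ, 0 ≤ ‖η (R^[j] p)‖ := fun j => norm_nonneg _
  have hshift : Summable (fun j : ℕ => ‖η (R^[j+1] p)‖) := by
    apply Summable.of_nonneg_of_le (fun j => hFnonneg (j+1)) _ htsum
    intro j
    exact le_trans (hB (j+1)) (hstep j)
  have hsum : Summable (fun j : ℕ => ‖η (R^[j] p)‖) :=
    (summable_nat_add_iff 1).mp hshift
  refine ⟨hsum, ?_⟩
  have hsplit := Summable.tsum_eq_zero_add hsum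
  have hF0 : ‖η (R^[0] p)‖ ≤ A := by
    have := hB 0
    simpa [hDdef] using this
  have htail : ∑' j : ℕ, ‖η (R^[j+1] p)‖ ≤ c := by
    calc ∑' j : ℕ, ‖η (R^[j+1] p)‖ ≤ ∑' j : ℕ, c * (g j - g (j+1)) :=
          Summable.tsum_le_tsum (fun j => le_trans (hB (j+1)) (hstep j)) hshift htsum
      _ = c * 1 := by rw [(htele.mul_left c).tsum_eq]
      _ = c := mul_one c
  rw [hsplit]
  have hfinal : A + c = C * ‖u‖ ^ n * (t + ((k:ℝ) - 1) / (μ * (n:ℝ))) := by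
    have hum : ‖u‖ ^ m = ‖u‖ ^ n * t := by
      rw [htdef, ← pow_add]
      congr 1
      omega
    rw [hAdef, hcdef, hAdef, hum, hrdef]
    have h1 : (n:ℝ) ≠ 0 := ne_of_gt hnpos
    have h2 : ((k:ℝ) - 1) ≠ 0 := ne_of_gt hk1
    field_simp
  calc ‖η (R^[0] p)‖ + ∑' j : ℕ, ‖η (R^[j+1] p)‖ ≤ A + c := add_le_add hF0 htail
    _ = C * ‖u‖ ^ n * (t + ((k:ℝ) - 1) / (μ * (n:ℝ))) := hfinal
end
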